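/- Let A be a self-adjoint matrix in M_n(ℂ) and β ≠ 0 a real number. Define the state ω_β(B) = Tr(e^{-βA} B)/Tr(e^{-βA}) on M_n(ℂ). Then ω_β factors through the conditional expectation onto the diagonal matrices (i.e. ω_β(B) = ω_β(D(B)) where D(B) is the diagonal part of B) if and only if A is a diagonal matrix. -/

import Mathlib

/-!
Pairing `ω_β` with the matrix units `single j i 1`, whose diagonal part vanishes for `i ≠ j`,
shows that `ω_β` factors through `D` exactly when `M = e^{-βA}` is diagonal (the normalising
trace is a sum of positive exponentials). Writing `A = U diag(λ) U*`, a diagonal `M` satisfies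
`M U = U diag(e^{-βλ})`, so the nonzero entries of each row `i` of `U` sit at eigenvalues `λ_k`
with `e^{-βλ_k} = M i i`, hence, as `t ↦ e^{-βt}` is injective for `β ≠ 0`, at a single
eigenvalue `c_i`. Row `i` of `A = U diag(λ) U*` is then `c_i` times row `i` of `U U* = 1`.
-/

open Matrix Function

namespace Matrix

variable {n R : Type*} [Fintype n] [DecidableEq n]

theorem isDiag_iff_forall_trace_mul_eq_trace_mul_diagonal [Semiring R] (M : Matrix n n R) :
    M.IsDiag ↔ ∀ B : Matrix n n R, (M * B).trace = (M * diagonal fun i => B i i).trace := by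
  constructor
  · intro hM B
    rw [← hM.diagonal_diag]
    simp [trace, diagonal_mul]
  · intro h i j hij
    have hdiag : (fun k => single j i (1 : R) k k) = 0 := by
      ext k
      simp only [single_apply, Pi.zero_apply, ite_eq_right_iff, and_imp]
      rintro rfl rfl
      exact absurd rfl hij
    simpa [trace_mul_single, hdiag] using h (single j i 1)

theorem isDiag_mul_diagonal_mul_of_diagonal_mul_eq [CommRing R] [NoZeroDivisors R] {α : Type*}
    {U V : Matrix n n R} (hUV : U * V = 1) {d : n → α} {f g : α → R} (hf : Injective f)
    {w : n → R} (h : diagonal w * U = U * diagonal (f ∘ d)) :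
    (U * diagonal (g ∘ d) * V).IsDiag := by
  intro i j hij
  have : Nonempty α := ⟨d i⟩
  have hrow : ∀ k, U i k * g (d k) = U i k * g (invFun f (w i)) := by
    intro k
    by_cases hk : U i k = 0
    · simp [hk]
    have hfk : f (d k) = w i := by
      have := congrFun (congrFun h i) k
      simp only [diagonal_mul, mul_diagonal, Function.comp_apply] at this
      exact (mul_left_cancel₀ hk (by rw [← this, mul_comm])).symm
    rw [← hfk, leftInverse_invFun hf]
  calc (U * diagonal (g ∘ d) * V) i j
      = ∑ k, U i k * g (invFun f (w i)) * V k j := by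
        rw [mul_apply]
        simp only [mul_diagonal, Function.comp_apply, hrow]
    _ = g (invFun f (w i)) * (U * V) i j := by
        rw [mul_apply, Finset.mul_sum]
        exact Finset.sum_congr rfl fun k _ => by ring
    _ = 0 := by simp [hUV, hij]

theorem IsDiag.exp {𝔸 : Type*} [Ring 𝔸] [TopologicalSpace 𝔸] [IsTopologicalRing 𝔸] [T2Space 𝔸]
    [Algebra ℚ 𝔸] {M : Matrix n n 𝔸} (hM : M.IsDiag) : (NormedSpace.exp M).IsDiag := by
  rw [← hM.diagonal_diag, exp_diagonal]
  exact isDiag_diagonal _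

theorem exp_unitary_conj {𝔸 : Type*} [NormedRing 𝔸] [NormedAlgebra ℚ 𝔸] [CompleteSpace 𝔸]
    [StarRing 𝔸] (U : unitary (Matrix n n 𝔸)) (X : Matrix n n 𝔸) :
    NormedSpace.exp ((U : Matrix n n 𝔸) * X * star (U : Matrix n n 𝔸)) =
      U * NormedSpace.exp X * star (U : Matrix n n 𝔸) :=
  exp_units_conj (Unitary.toUnits U) X

theorem trace_unitary_conj [CommSemiring R] [StarRing R] (U : unitary (Matrix n n R))
    (X : Matrix n n R) : ((U : Matrix n n R) * X * star (U : Matrix n n R)).trace = X.trace := by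
  rw [trace_mul_cycle, Unitary.coe_star_mul_self, one_mul]

namespace IsHermitian

variable {A : Matrix n n ℂ} (hA : A.IsHermitian)
include hA

theorem exp_smul_eq (t : ℝ) :
    NormedSpace.exp ((t : ℂ) • A) = (hA.eigenvectorUnitary : Matrix n n ℂ) *
      (diagonal fun k => Complex.exp (t * hA.eigenvalues k)) *
      star (hA.eigenvectorUnitary : Matrix n n ℂ) := by
  conv_lhs => rw [hA.spectral_theorem]
  rw [← map_smul, Unitary.conjStarAlgAut_apply, exp_unitary_conj, ← diagonal_smul, exp_diagonal]
  congr
  ext k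
  simp [Complex.exp_eq_exp_ℂ]

theorem trace_exp_smul_ne_zero [Nonempty n] (t : ℝ) :
    (NormedSpace.exp ((t : ℂ) • A)).trace ≠ 0 := by
  rw [hA.exp_smul_eq, trace_unitary_conj, trace_diagonal]
  have hpos : 0 < ∑ k, Real.exp (t * hA.eigenvalues k) :=
    Finset.sum_pos (fun k _ => Real.exp_pos _) Finset.univ_nonempty
  exact_mod_cast hpos.ne'

theorem isDiag_exp_smul_iff {t : ℝ} (ht : t ≠ 0) :
    (NormedSpace.exp ((t : ℂ) • A)).IsDiag ↔ A.IsDiag := by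
  refine ⟨fun hM => ?_, fun hA' => (hA'.smul _).exp⟩
  set U := hA.eigenvectorUnitary
  have hinj : Injective fun x : ℝ => Complex.exp (t * x) := by
    intro x y hxy
    simp only [← Complex.ofReal_mul, ← Complex.ofReal_exp, Complex.ofReal_inj] at hxy
    exact mul_left_cancel₀ ht (Real.exp_injective hxy)
  have hcomm : diagonal (NormedSpace.exp ((t : ℂ) • A)).diag * U =
      U * diagonal ((fun x : ℝ => Complex.exp (t * x)) ∘ hA.eigenvalues) := by
    rw [hM.diagonal_diag, hA.exp_smul_eq, mul_assoc, Unitary.coe_star_mul_self, mul_one]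
    rfl
  rw [hA.spectral_theorem, Unitary.conjStarAlgAut_apply]
  exact isDiag_mul_diagonal_mul_of_diagonal_mul_eq (Unitary.coe_mul_star_self U) hinj hcomm

end IsHermitian

end Matrix

/-- For a self-adjoint matrix `A ∈ Mₙ(ℂ)` and `β ≠ 0`, the state
`ω_β(B) = Tr(e^{-βA} B)/Tr(e^{-βA})` factors through the conditional expectation
onto the diagonal matrices iff `A` is diagonal. -/
theorem stmt0 {n : ℕ} (A : Matrix (Fin n) (Fin n) ℂ) (hA : A.IsHermitian)
    (β : ℝ) (hβ : β ≠ 0) :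
    (∀ B : Matrix (Fin n) (Fin n) ℂ,
        (NormedSpace.exp ((-β : ℂ) • A) * B).trace /
            (NormedSpace.exp ((-β : ℂ) • A)).trace =
          (NormedSpace.exp ((-β : ℂ) • A) *
              Matrix.diagonal (fun i => B i i)).trace /
            (NormedSpace.exp ((-β : ℂ) • A)).trace) ↔
      A.IsDiag := by
  rcases isEmpty_or_nonempty (Fin n) with _ | _
  · exact iff_of_true (fun B => by simp [Subsingleton.elim B 0]) fun i => isEmptyElim i
  have htrace := hA.trace_exp_smul_ne_zero (-β)
  rw [← hA.isDiag_exp_smul_iff (neg_ne_zero.mpr hβ),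
    isDiag_iff_forall_trace_mul_eq_trace_mul_diagonal]
  push_cast at htrace ⊢
  simp_rw [div_left_inj' htrace]
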